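/- Lemma (decoding of distant syndrome unions). Let T_d be a toric lattice, let s_1 be a syndrome decoded by MS in k_1 iterations and s_2 a syndrome decoded by MS in k_2 iterations, with k_1 ≤ k_2. Assume further that for every k with k_1 ≤ k ≤ k_2, the MS hard-decision estimate at iteration k on input s_1 still satisfies s_1 (i.e., H ê_k = s_1). If the distance between s_1 and s_2 (the minimum graph distance between an unsatisfied check of s_1 and an unsatisfied check of s_2) is at least 2·k_2, then the syndrome s_1 + s_2 is decoded by MS in k_2 iterations. -/

import Mathlib

namespace ToricMS

/-- Checks of the toric lattice: vertices of the `d × d` torus grid. -/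
abbrev V (d : ℕ) : Type := ZMod d × ZMod d

/-- The toric lattice `T_d`: two checks are adjacent iff their difference is
`(±1, 0)` or `(0, ±1)` mod `d` (for `d ≥ 3` the inequality clause is automatic). -/
def Toric (d : ℕ) : SimpleGraph (V d) where
  Adj v w := v ≠ w ∧
    (v - w = (1, 0) ∨ v - w = (-1, 0) ∨ v - w = (0, 1) ∨ v - w = (0, -1))
  symm := by
    constructor
    rintro v w ⟨hne, h⟩
    refine ⟨hne.symm, ?_⟩
    have hswap : w - v = -(v - w) := by ring
    rcases h with h | h | h | h <;> rw [hswap, h] <;> simp [Prod.ext_iff]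
  loopless := ⟨fun v h => h.1 rfl⟩

/-- Weight of an error: the number of qubits (edges) in error. -/
noncomputable def wt {d : ℕ} (e : (Toric d).edgeSet → ZMod 2) : ℕ :=
  Nat.card {q : (Toric d).edgeSet // e q = 1}

/-- Syndrome of an error: mod-2 sum of the error over the qubits incident to each check. -/
noncomputable def synd {d : ℕ} (e : (Toric d).edgeSet → ZMod 2) : V d → ZMod 2 :=
  fun c => (Nat.card {q : (Toric d).edgeSet // e q = 1 ∧ c ∈ (q : Sym2 (V d))} : ZMod 2)

/-- A degenerate error: some different error of no larger weight has the same syndrome. -/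
def Degenerate {d : ℕ} (e : (Toric d).edgeSet → ZMod 2) : Prop :=
  ∃ e' : (Toric d).edgeSet → ZMod 2, e' ≠ e ∧ wt e' ≤ wt e ∧ synd e' = synd e

/-- The fake syndrome `s^c` having `c` as its only unsatisfied check. -/
def fakeS (d : ℕ) (c : V d) : V d → ZMod 2 := fun c' => if c' = c then 1 else 0

/-- The error `ε⁴` consisting of 4 consecutive collinear (horizontal) qubits. -/
def eps4 (d : ℕ) : (Toric d).edgeSet → ZMod 2 := fun q =>
  if q.val = Sym2.mk (((0 : ZMod d), (0 : ZMod d)) : V d) ((1, 0) : V d)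
      ∨ q.val = Sym2.mk (((1 : ZMod d), (0 : ZMod d)) : V d) ((2, 0) : V d)
      ∨ q.val = Sym2.mk (((2 : ZMod d), (0 : ZMod d)) : V d) ((3, 0) : V d)
      ∨ q.val = Sym2.mk (((3 : ZMod d), (0 : ZMod d)) : V d) ((4, 0) : V d)
  then 1 else 0

/-- Walk without return (wwr) in `T_d`, as its list of visited checks. -/
def IsWWR (d : ℕ) (l : List (V d)) : Prop :=
  l.Chain' (Toric d).Adj ∧ ∀ j : ℕ, j + 2 < l.length → l[j]? ≠ l[j + 2]?

/-- A walk starting with the root edge `e_q = {a, b}` (either orientation allowed). -/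
def StartsQ (d : ℕ) (a b : V d) (l : List (V d)) : Prop :=
  l.take 2 = [a, b] ∨ l.take 2 = [b, a]

/-- Vertices of the decoding tree `T_{i,q}` (`q` the edge `{a,b}`): wwrs of
length `1, …, i` starting with `e_q`, encoded by their check lists. -/
def IsTreeVertex (d : ℕ) (a b : V d) (i : ℕ) (l : List (V d)) : Prop :=
  IsWWR d l ∧ StartsQ d a b l ∧ 2 ≤ l.length ∧ l.length ≤ i + 1

/-- Edges of the decoding tree `T_{i,q}`: wwrs of length `1, …, i+1` starting with
`e_q` (an edge is identified with the wwr ending with it), where the root edge is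
canonically represented by `[a, b]`. -/
def IsTreeEdge (d : ℕ) (a b : V d) (i : ℕ) (l : List (V d)) : Prop :=
  IsWWR d l ∧ StartsQ d a b l ∧ 2 ≤ l.length ∧ l.length ≤ i + 2 ∧
    (l.length = 2 → l = [a, b])

/-- Dangling edges: tree edges at maximal depth, with a single endpoint in the tree. -/
def IsDangling (d : ℕ) (a b : V d) (i : ℕ) (l : List (V d)) : Prop :=
  IsTreeEdge d a b i l ∧ l.length = i + 2

/-- The check of `T_d` associated with a tree vertex. -/
def vcheck {d : ℕ} (l : List (V d)) : V d := l.getLastD 0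

/-- Incidence between a tree vertex and a tree edge. -/
def IncidentVE {d : ℕ} (lv le : List (V d)) : Prop :=
  lv = le ∨ lv = le.dropLast ∨ (le.length = 2 ∧ lv = le.reverse)

/-- A configuration on the decoding tree for syndrome `s`: an edge labelling such
that around every tree vertex, the mod-2 sum of the labels of the incident edges
equals the syndrome value of the associated check. -/
def IsConfig (d : ℕ) (a b : V d) (i : ℕ) (s : V d → ZMod 2)
    (C : List (V d) → ZMod 2) : Prop :=
  ∀ lv, IsTreeVertex d a b i lv →
    (Nat.card {le : List (V d) //
        IsTreeEdge d a b i le ∧ IncidentVE lv le ∧ C le = 1} : ZMod 2) = s (vcheck lv)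

/-- Weight of a configuration: its number of labeled tree edges. -/
noncomputable def cweight (d : ℕ) (a b : V d) (i : ℕ) (C : List (V d) → ZMod 2) : ℕ :=
  Nat.card {le : List (V d) // IsTreeEdge d a b i le ∧ C le = 1}

/-- Minimal weight of a configuration whose root edge has label `r`. -/
noncomputable def minW (d : ℕ) (a b : V d) (i : ℕ) (s : V d → ZMod 2) (r : ZMod 2) : ℕ :=
  sInf {n : ℕ | ∃ C : List (V d) → ZMod 2,
    IsConfig d a b i s C ∧ C [a, b] = r ∧ cweight d a b i C = n}

/-- A posteriori value of the (oriented) qubit `(a,b)` at iteration `i` computed by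
min-sum (Wiberg): minimal root-labeled weight minus minimal root-unlabeled weight. -/
noncomputable def APPo (d : ℕ) (s : V d → ZMod 2) (i : ℕ) (a b : V d) : ℤ :=
  (minW d a b i s 1 : ℤ) - (minW d a b i s 0 : ℤ)

/-- A posteriori value of a qubit (an unordered edge) at iteration `i`. -/
noncomputable def APP (d : ℕ) (s : V d → ZMod 2) (i : ℕ) : Sym2 (V d) → ℤ :=
  Sym2.lift ⟨fun a b => min (APPo d s i a b) (APPo d s i b a), fun _ _ => min_comm _ _⟩

/-- The MS hard-decision estimate at iteration `i`. -/
noncomputable def hatE (d : ℕ) (s : V d → ZMod 2) (i : ℕ) : (Toric d).edgeSet → ZMod 2 :=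
  fun q => if APP d s i q.val < 0 then 1 else 0

/-- `s` is decoded by MS in `k` iterations: the estimate satisfies the syndrome at
iteration `k` and not before. -/
def DecodedIn (d : ℕ) (s : V d → ZMod 2) (k : ℕ) : Prop :=
  1 ≤ k ∧ synd (hatE d s k) = s ∧ ∀ j, 1 ≤ j → j < k → synd (hatE d s j) ≠ s

/-- The error `e` is correctly decoded by MS. -/
def CorrectlyDecoded {d : ℕ} (e : (Toric d).edgeSet → ZMod 2) : Prop :=
  ∃ k, DecodedIn d (synd e) k ∧ hatE d (synd e) k = e

/-- Length of the longest common prefix of two lists. -/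
def cpl {d : ℕ} : List (V d) → List (V d) → ℕ
  | x :: xs, y :: ys => if x = y then cpl xs ys + 1 else 0
  | _, _ => 0

/-- Distance (number of edges of the connecting path) between two tree vertices. -/
def treeDist {d : ℕ} (lu lv : List (V d)) : ℕ :=
  if lu.take 2 = lv.take 2 then lu.length + lv.length - 2 * cpl lu lv
  else lu.length + lv.length - 3

/-- Strip a dangling edge down to its unique endpoint vertex. -/
def stripD {d : ℕ} (i : ℕ) (l : List (V d)) : List (V d) :=
  if l.length = i + 2 then l.dropLast else l

/-- `le` is an edge on the (unique) tree path between tree vertices `lu` and `lv`. -/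
def OnPathVV {d : ℕ} (lu lv le : List (V d)) : Prop :=
  if lu.take 2 = lv.take 2 then (le <+: lu ∨ le <+: lv) ∧ cpl lu lv < le.length
  else ((le <+: lu ∨ le <+: lv) ∧ 3 ≤ le.length) ∨ le.length = 2

/-- `lw` is a vertex on the (unique) tree path between tree vertices `lu` and `lv`. -/
def OnPathVertexVV {d : ℕ} (lu lv lw : List (V d)) : Prop :=
  if lu.take 2 = lv.take 2 then (lw <+: lu ∨ lw <+: lv) ∧ cpl lu lv ≤ lw.length
  else (lw <+: lu ∨ lw <+: lv) ∧ 2 ≤ lw.length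

/-- A link of the decoding tree `T_{i,q}` for syndrome `s`: a path in the tree
whose vertex endpoints (if any) are associated with unsatisfied checks; an
endpoint is either a tree vertex or a dangling edge. -/
structure Link (d : ℕ) (a b : V d) (i : ℕ) (s : V d → ZMod 2) where
  endA : List (V d)
  endB : List (V d)
  hA : IsTreeVertex d a b i endA ∨ IsDangling d a b i endA
  hB : IsTreeVertex d a b i endB ∨ IsDangling d a b i endB
  hAu : IsTreeVertex d a b i endA → s (vcheck endA) = 1
  hBu : IsTreeVertex d a b i endB → s (vcheck endB) = 1
  hne : endA ≠ endB

variable {d : ℕ} {a b : V d} {i : ℕ} {s : V d → ZMod 2}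

/-- The tree edges lying on a link. -/
def Link.on (L : Link d a b i s) (le : List (V d)) : Prop :=
  OnPathVV (stripD i L.endA) (stripD i L.endB) le ∨
    (L.endA.length = i + 2 ∧ le = L.endA) ∨ (L.endB.length = i + 2 ∧ le = L.endB)

/-- The length (number of edges) of a link. -/
def Link.len (L : Link d a b i s) : ℕ :=
  treeDist (stripD i L.endA) (stripD i L.endB) +
    (if L.endA.length = i + 2 then 1 else 0) + (if L.endB.length = i + 2 then 1 else 0)

/-- A proper link: both endpoints are (unsatisfied) tree vertices. -/
def Link.Proper (L : Link d a b i s) : Prop :=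
  IsTreeVertex d a b i L.endA ∧ IsTreeVertex d a b i L.endB

/-- A labeled link (w.r.t. a configuration `C`): all its edges are labeled. -/
def Link.IsLabeled (L : Link d a b i s) (C : List (V d) → ZMod 2) : Prop :=
  ∀ le, IsTreeEdge d a b i le → L.on le → C le = 1

/-- A maximal labeled link: it cannot be extended into a longer labeled link. -/
def Link.IsMaxLabeled (L : Link d a b i s) (C : List (V d) → ZMod 2) : Prop :=
  L.IsLabeled C ∧
    ∀ L' : Link d a b i s, L'.IsLabeled C → (∀ le, L.on le → L'.on le) → L'.len ≤ L.len

/-- An `I`-link: a proper link of length 4 not containing the root, descending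
four levels of the tree. -/
def Link.IsI (L : Link d a b i s) : Prop :=
  L.Proper ∧ L.len = 4 ∧ ¬ L.on [a, b] ∧
    (L.endA.length + 4 = L.endB.length ∨ L.endB.length + 4 = L.endA.length)

/-- A `Γ`-link: a proper link of length 4 not containing the root, going up one
level then down three. -/
def Link.IsGamma (L : Link d a b i s) : Prop :=
  L.Proper ∧ L.len = 4 ∧ ¬ L.on [a, b] ∧
    (L.endA.length + 2 = L.endB.length ∨ L.endB.length + 2 = L.endA.length)

/-- A `Λ`-link: a proper link of length 4 not containing the root, going up two
levels then down two (its endpoints are at the same depth). -/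
def Link.IsLambda (L : Link d a b i s) : Prop :=
  L.Proper ∧ L.len = 4 ∧ ¬ L.on [a, b] ∧ L.endA.length = L.endB.length

/-- Distance of a tree vertex to the bottom: minimal length of a path starting
at that vertex and ending with a dangling edge. -/
noncomputable def distToBottom (d : ℕ) (a b : V d) (i : ℕ) (lv : List (V d)) : ℕ :=
  sInf {n : ℕ | ∃ le, IsDangling d a b i le ∧ n = treeDist lv le.dropLast + 1}

/-- A walk in the decoding tree: a sequence of tree edges `es` together with the
sequence `vs` of tree vertices through which consecutive edges are traversed. -/
structure TreeWalk (d : ℕ) (a b : V d) (i : ℕ) where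
  es : List (List (V d))
  vs : List (List (V d))
  hlen : vs.length + 1 = es.length
  hes : ∀ le ∈ es, IsTreeEdge d a b i le
  hvs : ∀ lv ∈ vs, IsTreeVertex d a b i lv
  hinc : ∀ (j : ℕ) (hj : j < vs.length),
    IncidentVE (vs[j]'hj) (es[j]'(by omega)) ∧ IncidentVE (vs[j]'hj) (es[j + 1]'(by omega))
  htrav : ∀ (j : ℕ) (hj : j + 1 < vs.length), vs[j]'(by omega) ≠ vs[j + 1]'hj

/-- The four unit directions of the square lattice. -/
def dirVec (d : ℕ) : Fin 4 → V d := ![(1, 0), (0, 1), (-1, 0), (0, -1)]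

/-- A rigid embedding of a patch `K` of `T_d` into `T_{d'}`: an injective map
which, up to a fixed symmetry `g` of the square (an element of the dihedral
group acting on the four directions), preserves the local square-lattice
structure — hence it is an injective graph homomorphism mapping plaquettes to
plaquettes. -/
def IsRigidEmbed (d d' : ℕ) (K : Set (V d)) (φ : V d → V d') : Prop :=
  Set.InjOn φ K ∧ ∃ g : Fin 4 → Fin 4, Function.Bijective g ∧
    (∀ j, g (j + 2) = g j + 2) ∧
    ∀ x ∈ K, ∀ j : Fin 4, x + dirVec d j ∈ K →
      φ (x + dirVec d j) = φ x + dirVec d' (g j)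

/-- The embedding of a syndrome under an embedding map `φ`. -/
noncomputable def embedSynd (d d' : ℕ) (s : V d → ZMod 2) (φ : V d → V d') :
    V d' → ZMod 2 :=
  fun c' => @ite _ (∃ c, s c = 1 ∧ φ c = c') (Classical.propDecidable _) 1 0

/-! ### Auxiliary lemmas -/

section Aux
variable {d : ℕ}

lemma chain_walk : ∀ (l : List (V d)) (x : V d),
    List.Chain (Toric d).Adj x l → ∃ p : (Toric d).Walk x (l.getLastD x), p.length = l.length
  | [], _, _ => ⟨SimpleGraph.Walk.nil, rfl⟩
  | y :: ys, x, h => by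
    replace h := List.isChain_cons_cons.mp h
    obtain ⟨p, hp⟩ := chain_walk ys y h.2
    rw [List.getLastD_cons]
    exact ⟨SimpleGraph.Walk.cons h.1 p, by simp [hp]⟩

lemma walk_pair {x y u v : V d} (h : (Toric d).Adj x y)
    (hu : u = x ∨ u = y) (hv : v = x ∨ v = y) : ∃ w : (Toric d).Walk u v, w.length ≤ 1 := by
  rcases hu with rfl | rfl <;> rcases hv with rfl | rfl
  · exact ⟨.nil, by simp⟩
  · exact ⟨.cons h .nil, by simp⟩
  · exact ⟨.cons h.symm .nil, by simp⟩
  · exact ⟨.nil, by simp⟩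

lemma startsQ_comm {a b : V d} {l : List (V d)} (h : StartsQ d a b l) : StartsQ d b a l :=
  h.symm

lemma treeVertex_comm {a b : V d} {i : ℕ} {l : List (V d)} (h : IsTreeVertex d a b i l) :
    IsTreeVertex d b a i l :=
  ⟨h.1, startsQ_comm h.2.1, h.2.2⟩

lemma treeVertex_mono {a b : V d} {i i' : ℕ} {l : List (V d)} (hi : i ≤ i')
    (h : IsTreeVertex d a b i l) : IsTreeVertex d a b i' l :=
  ⟨h.1, h.2.1, h.2.2.1, h.2.2.2.trans (by omega)⟩

/-- A tree vertex's check is reached by a short walk from one endpoint of the root edge. -/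
lemma tv_walk {a b : V d} {i : ℕ} {l : List (V d)} (h : IsTreeVertex d a b i l) :
    ∃ u, (u = a ∨ u = b) ∧ ∃ p : (Toric d).Walk u (vcheck l), p.length + 2 = l.length := by
  obtain ⟨⟨hch, _⟩, hstart, hlen2, hleni⟩ := h
  have key : ∀ x y : V d, l.take 2 = [x, y] → (y = a ∨ y = b) →
      ∃ u, (u = a ∨ u = b) ∧ ∃ p : (Toric d).Walk u (vcheck l), p.length + 2 = l.length := by
    intro x y htake hy
    obtain ⟨rest, hl⟩ : ∃ rest, l = x :: y :: rest := by
      refine ⟨l.drop 2, ?_⟩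
      conv_lhs => rw [← List.take_append_drop 2 l, htake]
      simp
    subst hl
    have hchain : List.Chain (Toric d).Adj y rest := (List.isChain_cons_cons.mp hch).2
    obtain ⟨p, hp⟩ := chain_walk _ _ hchain
    have hv : vcheck (x :: y :: rest) = rest.getLastD y := by
      rw [vcheck, List.getLastD_cons, List.getLastD_cons]
    rw [hv]
    exact ⟨y, hy, p, by simp [hp]⟩
  rcases hstart with htake | htake
  · exact key a b htake (Or.inr rfl)
  · exact key b a htake (Or.inl rfl)

lemma zmod2_cases (x : ZMod 2) : x = 0 ∨ x = 1 := by
  revert x; decide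

end Aux
section Synd
variable {d : ℕ} [NeZero d]

lemma synd_add (e1 e2 : (Toric d).edgeSet → ZMod 2) : synd (e1 + e2) = synd e1 + synd e2 := by
  classical
  haveI : Fintype ((Toric d).edgeSet) := Fintype.ofFinite _
  funext c
  have hs : ∀ e : (Toric d).edgeSet → ZMod 2,
      synd e c = ∑ q : (Toric d).edgeSet, if c ∈ (q : Sym2 (V d)) then e q else 0 := by
    intro e
    rw [synd, Nat.card_eq_fintype_card, Fintype.card_subtype, ← Finset.sum_boole]
    refine Finset.sum_congr rfl fun q _ => ?_
    rcases zmod2_cases (e q) with h | h <;> rw [h] <;> by_cases hc : c ∈ (q : Sym2 (V d)) <;>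
      simp [hc]
  rw [Pi.add_apply, hs, hs, hs, ← Finset.sum_add_distrib]
  refine Finset.sum_congr rfl fun q _ => ?_
  by_cases hc : c ∈ (q : Sym2 (V d)) <;> simp [hc]

omit [NeZero d] in
lemma synd_ne_zero {e : (Toric d).edgeSet → ZMod 2} {c : V d} (h : synd e c ≠ 0) :
    ∃ q : (Toric d).edgeSet, e q = 1 ∧ c ∈ (q : Sym2 (V d)) := by
  by_contra hno
  push_neg at hno
  refine h ?_
  haveI : IsEmpty {q : (Toric d).edgeSet // e q = 1 ∧ c ∈ (q : Sym2 (V d))} :=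
    ⟨fun ⟨q, h1, h2⟩ => hno q h1 h2⟩
  rw [synd, Nat.card_of_isEmpty]
  rfl
end Synd
section APPlem
variable {d : ℕ} {i : ℕ}

lemma isConfig_congr {a b : V d} {s s' : V d → ZMod 2}
    (h : ∀ lv, IsTreeVertex d a b i lv → s (vcheck lv) = s' (vcheck lv))
    {C} (hC : IsConfig d a b i s C) : IsConfig d a b i s' C :=
  fun lv hlv => (hC lv hlv).trans (h lv hlv)

lemma minW_congr {a b : V d} {s s' : V d → ZMod 2}
    (h : ∀ lv, IsTreeVertex d a b i lv → s (vcheck lv) = s' (vcheck lv)) (r : ZMod 2) :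
    minW d a b i s r = minW d a b i s' r := by
  unfold minW
  congr 1
  ext n
  constructor
  · rintro ⟨C, hC, hr, hw⟩; exact ⟨C, isConfig_congr h hC, hr, hw⟩
  · rintro ⟨C, hC, hr, hw⟩
    exact ⟨C, isConfig_congr (fun lv hlv => (h lv hlv).symm) hC, hr, hw⟩

lemma minW_zero {a b : V d} {s : V d → ZMod 2}
    (h : ∀ lv, IsTreeVertex d a b i lv → s (vcheck lv) = 0) :
    minW d a b i s 0 = 0 := by
  refine Nat.sInf_eq_zero.mpr (Or.inl ⟨fun _ => 0, fun lv hlv => ?_, rfl, ?_⟩)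
  · have hcz : Nat.card {le : List (V d) //
        IsTreeEdge d a b i le ∧ IncidentVE lv le ∧ (fun _ : List (V d) => (0 : ZMod 2)) le = 1}
        = 0 :=
      Nat.card_eq_zero.mpr (Or.inl ⟨fun ⟨_, _, _, h01⟩ => by simp at h01⟩)
    rw [hcz, h lv hlv, Nat.cast_zero]
  · have hcz : Nat.card {le : List (V d) //
        IsTreeEdge d a b i le ∧ (fun _ : List (V d) => (0 : ZMod 2)) le = 1} = 0 :=
      Nat.card_eq_zero.mpr (Or.inl ⟨fun ⟨_, _, h01⟩ => by simp at h01⟩)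
    rw [cweight, hcz]

lemma APPo_nonneg {a b : V d} {s : V d → ZMod 2}
    (h : ∀ lv, IsTreeVertex d a b i lv → s (vcheck lv) = 0) :
    0 ≤ APPo d s i a b := by
  rw [APPo, minW_zero h]
  simp

lemma APP_nonneg {x y : V d} {s : V d → ZMod 2}
    (h : ∀ lv, IsTreeVertex d x y i lv → s (vcheck lv) = 0) :
    0 ≤ APP d s i (Sym2.mk x y) := by
  simp only [APP, Sym2.lift_mk]
  exact le_min (APPo_nonneg h) (APPo_nonneg fun lv hlv => h lv (treeVertex_comm hlv))

lemma APP_congr {x y : V d} {s s' : V d → ZMod 2}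
    (h : ∀ lv, IsTreeVertex d x y i lv → s (vcheck lv) = s' (vcheck lv)) :
    APP d s i (Sym2.mk x y) = APP d s' i (Sym2.mk x y) := by
  have h' : ∀ lv, IsTreeVertex d y x i lv → s (vcheck lv) = s' (vcheck lv) :=
    fun lv hlv => h lv (treeVertex_comm hlv)
  simp only [APP, Sym2.lift_mk, APPo]
  rw [minW_congr h, minW_congr h, minW_congr h', minW_congr h']

lemma APP_neg_exists {x y : V d} {s : V d → ZMod 2}
    (h : APP d s i (Sym2.mk x y) < 0) :
    ∃ lv, IsTreeVertex d x y i lv ∧ s (vcheck lv) = 1 := by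
  by_contra hno
  push_neg at hno
  exact absurd (APP_nonneg fun lv hlv => (zmod2_cases _).resolve_right (hno lv hlv))
    (by omega)

lemma zmod2_add_cancel : ∀ a b x y : ZMod 2, a + b = x + y → (a = x ↔ b = y) := by decide

end APPlem
/-- **Lemma (decoding of distant syndrome unions).** -/
theorem distant_syndrome_union (d : ℕ) (hd : 3 ≤ d) (s1 s2 : V d → ZMod 2)
    (k1 k2 : ℕ) (h1 : DecodedIn d s1 k1) (h2 : DecodedIn d s2 k2) (hk : k1 ≤ k2)
    (hstay : ∀ k, k1 ≤ k → k ≤ k2 → synd (hatE d s1 k) = s1)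
    (hdist : ∀ c1 c2 : V d, s1 c1 = 1 → s2 c2 = 1 → 2 * k2 ≤ (Toric d).dist c1 c2) :
    DecodedIn d (s1 + s2) k2 := by
  haveI : NeZero d := ⟨by omega⟩
  obtain ⟨hk2one, hs2eq, hs2lt⟩ := h2
  -- two unsatisfied tree checks of s1 and s2 in the same decoding tree are impossible
  have hdist' : ∀ (x y : V d), ∀ l1 l2, IsTreeVertex d x y k2 l1 →
      IsTreeVertex d x y k2 l2 → s1 (vcheck l1) = 1 → s2 (vcheck l2) = 1 → False := by
    intro x y l1 l2 hl1 hl2 hv1 hv2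
    obtain ⟨u1, hu1, p1, hp1⟩ := tv_walk hl1
    obtain ⟨u2, hu2, p2, hp2⟩ := tv_walk hl2
    have hxy : (Toric d).Adj x y := by
      obtain ⟨⟨hch, -⟩, hstart, hlen2, -⟩ := hl1
      rcases hstart with htake | htake
      · have : l1 = x :: y :: l1.drop 2 := by
          conv_lhs => rw [← List.take_append_drop 2 l1, htake]
          simp
        rw [this] at hch
        exact (List.isChain_cons_cons.mp hch).1
      · have : l1 = y :: x :: l1.drop 2 := by
          conv_lhs => rw [← List.take_append_drop 2 l1, htake]
          simp
        rw [this] at hch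
        exact ((List.isChain_cons_cons.mp hch).1).symm
    obtain ⟨w, hw⟩ := walk_pair hxy hu1 hu2
    have hle := SimpleGraph.dist_le (p1.reverse.append (w.append p2))
    rw [SimpleGraph.Walk.length_append, SimpleGraph.Walk.length_append,
      SimpleGraph.Walk.length_reverse] at hle
    have hdd := hdist _ _ hv1 hv2
    have hb1 := hl1.2.2.2
    have hb2 := hl2.2.2.2
    omega
  -- the estimates decouple
  have hkey : ∀ i, i ≤ k2 → hatE d (s1 + s2) i = hatE d s1 i + hatE d s2 i := by
    intro i hi
    funext q
    obtain ⟨z, hzmem⟩ := q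
    revert hzmem
    induction z using Sym2.ind with
    | _ x y =>
      intro hzmem
      have hval : ∀ s : V d → ZMod 2, hatE d s i ⟨Sym2.mk x y, hzmem⟩
          = if APP d s i (Sym2.mk x y) < 0 then 1 else 0 := fun _ => rfl
      by_cases h2f : ∃ lv, IsTreeVertex d x y k2 lv ∧ s2 (vcheck lv) = 1
      · obtain ⟨lv2, hlv2, hv2⟩ := h2f
        have h1f : ∀ lv, IsTreeVertex d x y i lv → s1 (vcheck lv) = 0 := by
          intro lv hlv
          rcases zmod2_cases (s1 (vcheck lv)) with h0 | hone
          · exact h0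
          · exact (hdist' x y lv lv2 (treeVertex_mono hi hlv) hlv2 hone hv2).elim
        have hcong : APP d (s1 + s2) i (Sym2.mk x y) = APP d s2 i (Sym2.mk x y) :=
          APP_congr fun lv hlv => by rw [Pi.add_apply, h1f lv hlv, zero_add]
        have h1z : hatE d s1 i ⟨Sym2.mk x y, hzmem⟩ = 0 := by
          rw [hval, if_neg (not_lt.mpr (APP_nonneg h1f))]
        rw [Pi.add_apply, h1z, zero_add, hval, hval, hcong]
      · push_neg at h2f
        have h2z : ∀ lv, IsTreeVertex d x y i lv → s2 (vcheck lv) = 0 := fun lv hlv =>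
          (zmod2_cases _).resolve_right (h2f lv (treeVertex_mono hi hlv))
        have hcong : APP d (s1 + s2) i (Sym2.mk x y) = APP d s1 i (Sym2.mk x y) :=
          APP_congr fun lv hlv => by rw [Pi.add_apply, h2z lv hlv, add_zero]
        have h2zz : hatE d s2 i ⟨Sym2.mk x y, hzmem⟩ = 0 := by
          rw [hval, if_neg (not_lt.mpr (APP_nonneg h2z))]
        rw [Pi.add_apply, h2zz, add_zero, hval, hval, hcong]
  -- a check where the estimated syndrome differs is close to an unsatisfied check
  have hsupp : ∀ (s : V d → ZMod 2) (j : ℕ), j ≤ k2 → ∀ c, synd (hatE d s j) c ≠ s c →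
      ∃ c', s c' = 1 ∧ ∃ p : (Toric d).Walk c c', p.length ≤ j := by
    intro s j hj c hne
    rcases zmod2_cases (s c) with hsc | hsc
    · have hnz : synd (hatE d s j) c ≠ 0 := by rw [hsc] at hne; exact hne
      obtain ⟨q, hq1, hqc⟩ := synd_ne_zero hnz
      obtain ⟨z, hzmem⟩ := q
      revert hq1 hqc
      revert hzmem
      induction z using Sym2.ind with
      | _ x y =>
        intro hzmem hq1 hqc
        have happ : APP d s j (Sym2.mk x y) < 0 := by
          by_contra hcon
          have : hatE d s j ⟨Sym2.mk x y, hzmem⟩ = 0 := if_neg hcon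
          rw [this] at hq1
          exact absurd hq1 (by decide)
        obtain ⟨lv, hlv, hv1⟩ := APP_neg_exists happ
        obtain ⟨u, hu, p, hp⟩ := tv_walk hlv
        have hcxy : c = x ∨ c = y := Sym2.mem_iff.mp hqc
        obtain ⟨w, hw⟩ := walk_pair hzmem hcxy hu
        refine ⟨vcheck lv, hv1, w.append p, ?_⟩
        rw [SimpleGraph.Walk.length_append]
        have hb := hlv.2.2.2
        omega
    · exact ⟨c, hsc, SimpleGraph.Walk.nil, by simp⟩
  refine ⟨hk2one, ?_, ?_⟩
  · rw [hkey k2 le_rfl, synd_add, hstay k2 hk le_rfl, hs2eq]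
  · intro j hj1 hj2 heq
    rw [hkey j (by omega), synd_add] at heq
    have hpt : ∀ c, synd (hatE d s1 j) c = s1 c ↔ synd (hatE d s2 j) c = s2 c := by
      intro c
      have hc := congrFun heq c
      rw [Pi.add_apply, Pi.add_apply] at hc
      exact zmod2_add_cancel _ _ _ _ hc
    have hboth : ∃ c, synd (hatE d s1 j) c ≠ s1 c ∧ synd (hatE d s2 j) c ≠ s2 c := by
      rcases lt_or_ge j k1 with hjk | hjk
      · obtain ⟨c, hc⟩ := Function.ne_iff.mp (h1.2.2 j hj1 hjk)
        exact ⟨c, hc, fun h => hc ((hpt c).mpr h)⟩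
      · obtain ⟨c, hc⟩ := Function.ne_iff.mp (hs2lt j hj1 hj2)
        exact ⟨c, fun h => hc ((hpt c).mp h), hc⟩
    obtain ⟨c, hc1, hc2⟩ := hboth
    obtain ⟨c1, hv1, p1, hp1⟩ := hsupp s1 j (by omega) c hc1
    obtain ⟨c2, hv2, p2, hp2⟩ := hsupp s2 j (by omega) c hc2
    have hle := SimpleGraph.dist_le (p1.reverse.append p2)
    rw [SimpleGraph.Walk.length_append, SimpleGraph.Walk.length_reverse] at hle
    have hdd := hdist _ _ hv1 hv2
    omega

end ToricMS
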